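/- arXiv:2007.02281 — 4 statements merged into one kernel-verified Lean document; each statement's English description precedes it below -/
import Mathlib

section
/- Let ξ₁,…,ξₙ be independent ℤ₊-valued random variables such that, for each i, there is a real sequence (g_{i,k})_{k≥1} with (j+1)·P(ξᵢ = j+1) = ∑_{k=0}^{j} g_{i,j−k+1}·P(ξᵢ = k) for every j ∈ ℤ₊. Then the sum Wₙ = ξ₁ + ⋯ + ξₙ satisfies, for every j ∈ ℤ₊, (j+1)·P(Wₙ = j+1) = ∑_{i=1}^{n} ∑_{k=0}^{j} g_{i,j−k+1}·P(Wₙ = k). -/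
/-! The generating function of `Wₙ` is the product of those of the `ξᵢ`, and the hypothesis on `ξᵢ`
says exactly that its generating function `Fᵢ` solves the formal differential equation
`Fᵢ' = Gᵢ Fᵢ` with `Gᵢ = ∑ₖ g_{i,k+1} Xᵏ`. By the Leibniz rule the product `F` then satisfies
`F' = (∑ᵢ Gᵢ) F`, which read coefficientwise is the claim. -/

open MeasureTheory ProbabilityTheory Finset

/-- `pm P X j` is the probability `P(X = j)` as a real number. -/
noncomputable def pm {Ω : Type*} [MeasurableSpace Ω] (P : Measure Ω) (X : Ω → ℕ) (j : ℕ) : ℝ :=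
  (P {ω | X ω = j}).toReal

open PowerSeries

section

variable {Ω : Type*} [MeasurableSpace Ω] (P : Measure Ω)

lemma pm_add_eq_sum_antidiagonal [IsFiniteMeasure P] {X Y : Ω → ℕ} (hX : Measurable X)
    (hY : Measurable Y) (hXY : IndepFun X Y P) (s : ℕ) :
    pm P (fun ω => X ω + Y ω) s = ∑ p ∈ antidiagonal s, pm P X p.1 * pm P Y p.2 := by
  have hfiber : {ω | X ω + Y ω = s} = ⋃ p ∈ antidiagonal s, X ⁻¹' {p.1} ∩ Y ⁻¹' {p.2} := by
    ext ω
    simp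
  have hdisj : Set.PairwiseDisjoint (antidiagonal s : Set (ℕ × ℕ))
      (fun p => X ⁻¹' {p.1} ∩ Y ⁻¹' {p.2}) := by
    intro p _ q _ hpq
    exact Set.disjoint_left.2 fun ω hp hq =>
      hpq (Prod.ext (hp.1.symm.trans hq.1) (hp.2.symm.trans hq.2))
  simp only [pm, ← measureReal_def, hfiber]
  rw [measureReal_biUnion_finset hdisj
    (fun p _ => (hX (measurableSet_singleton _)).inter (hY (measurableSet_singleton _)))]
  refine sum_congr rfl fun p _ => ?_
  simp only [measureReal_def, hXY.measure_inter_preimage_eq_mul _ _ (measurableSet_singleton _)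
    (measurableSet_singleton _), ENNReal.toReal_mul]
  rfl

noncomputable def pgf (X : Ω → ℕ) : PowerSeries ℝ := mk (pm P X)

lemma pgf_add_of_indepFun [IsFiniteMeasure P] {X Y : Ω → ℕ} (hX : Measurable X)
    (hY : Measurable Y) (hXY : IndepFun X Y P) :
    pgf P (fun ω => X ω + Y ω) = pgf P X * pgf P Y := by
  ext s
  simp only [pgf, coeff_mul, coeff_mk, pm_add_eq_sum_antidiagonal P hX hY hXY]

lemma pgf_const_zero [IsProbabilityMeasure P] : pgf P (fun _ => 0) = 1 := by
  ext s
  rcases s with _ | s <;> simp [pgf, pm, coeff_one]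

lemma pgf_finsetSum_of_iIndepFun [IsProbabilityMeasure P] {ι : Type*} {ξ : ι → Ω → ℕ}
    (hmeas : ∀ i, Measurable (ξ i)) (hindep : iIndepFun ξ P) (s : Finset ι) :
    pgf P (fun ω => ∑ i ∈ s, ξ i ω) = ∏ i ∈ s, pgf P (ξ i) := by
  classical
  induction s using Finset.induction_on with
  | empty => simpa using pgf_const_zero P
  | insert a s ha ih =>
    have hindep_a : IndepFun (ξ a) (fun ω => ∑ i ∈ s, ξ i ω) P := by
      simpa only [sum_fn] using (hindep.indepFun_finsetSum_of_notMem hmeas ha).symm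
    simp only [sum_insert ha, prod_insert ha, ← ih]
    exact pgf_add_of_indepFun P (hmeas a) (measurable_sum s fun i _ => hmeas i) hindep_a

end

lemma Derivation.apply_prod_of_apply_eq_mul {R A : Type*} [CommSemiring R] [CommSemiring A]
    [Algebra R A] (D : Derivation R A A) {ι : Type*} (s : Finset ι) (f a : ι → A)
    (hf : ∀ i ∈ s, D (f i) = a i * f i) :
    D (∏ i ∈ s, f i) = (∑ i ∈ s, a i) * ∏ i ∈ s, f i := by
  classical
  induction s using Finset.induction_on with
  | empty => simp
  | insert b s hb ih =>
    rw [prod_insert hb, sum_insert hb, D.leibniz, ih fun i hi => hf i (mem_insert_of_mem hi),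
      hf b (mem_insert_self b s), smul_eq_mul, smul_eq_mul]
    ring

lemma derivative_mk_eq_mul_iff {R : Type*} [CommSemiring R] (p a : ℕ → R) :
    d⁄dX R (mk p) = mk (fun k => a (k + 1)) * mk p ↔
      ∀ j : ℕ, ((j : R) + 1) * p (j + 1) = ∑ k ∈ range (j + 1), a (j - k + 1) * p k := by
  rw [PowerSeries.ext_iff]
  refine forall_congr' fun j => ?_
  rw [coeff_derivative, coeff_mul, ← Nat.sum_antidiagonal_swap]
  simp only [Prod.fst_swap, Prod.snd_swap, coeff_mk]
  rw [Nat.sum_antidiagonal_eq_sum_range_succ (fun k l => a (l + 1) * p k), mul_comm (p (j + 1))]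

/-- The PMF recursion for a sum of independent `ℕ`-valued random variables, each satisfying
the coefficient-level logarithmic-PGF recursion (Proposition 3.1, PMF form). -/
theorem sum_pmf_recursion {Ω : Type*} [MeasurableSpace Ω] (P : Measure Ω)
    [IsProbabilityMeasure P] (n : ℕ) (ξ : Fin n → Ω → ℕ) (hmeas : ∀ i, Measurable (ξ i))
    (hindep : iIndepFun ξ P)
    (g : Fin n → ℕ → ℝ)
    (hrec : ∀ i, ∀ j : ℕ, ((j : ℝ) + 1) * pm P (ξ i) (j + 1) =
      ∑ k ∈ Finset.range (j + 1), g i (j - k + 1) * pm P (ξ i) k)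
    (j : ℕ) :
    ((j : ℝ) + 1) * pm P (fun ω => ∑ i, ξ i ω) (j + 1) =
      ∑ i, ∑ k ∈ Finset.range (j + 1), g i (j - k + 1) * pm P (fun ω => ∑ i, ξ i ω) k := by
  have hfactor : ∀ i ∈ univ, d⁄dX ℝ (pgf P (ξ i)) = mk (fun k => g i (k + 1)) * pgf P (ξ i) :=
    fun i _ => (derivative_mk_eq_mul_iff _ _).2 (hrec i)
  have hsum : d⁄dX ℝ (pgf P (fun ω => ∑ i, ξ i ω)) =
      mk (fun k => ∑ i, g i (k + 1)) * pgf P (fun ω => ∑ i, ξ i ω) := by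
    rw [pgf_finsetSum_of_iIndepFun P hmeas hindep,
      (d⁄dX ℝ).apply_prod_of_apply_eq_mul univ _ _ hfactor]
    congr 1
    ext k
    simp only [map_sum, coeff_mk]
  rw [(derivative_mk_eq_mul_iff _ (fun k => ∑ i, g i k)).1 hsum j, sum_comm]
  simp only [sum_mul]
end

section
/- Let ξ₁,…,ξₙ be independent ℤ₊-valued random variables such that, for each i, there is a real sequence (g_{i,k})_{k≥1} with ∑_{k≥1} |g_{i,k}| < ∞ and (j+1)·P(ξᵢ = j+1) = ∑_{k=0}^{j} g_{i,j−k+1}·P(ξᵢ = k) for every j ∈ ℤ₊, and suppose Wₙ = ξ₁ + ⋯ + ξₙ has finite mean. Then for every bounded function h : ℤ₊ → ℝ, E[ ∑_{i=1}^{n} ∑_{k=0}^{∞} g_{i,k+1}·h(Wₙ + k + 1) ] = E[ Wₙ·h(Wₙ) ]. Equivalently, the operator 𝒜 h(j) = ∑_{i=1}^{n} ∑_{k=0}^{∞} g_{i,k+1} h(j+k+1) − j·h(j) satisfies E[𝒜 h(Wₙ)] = 0. -/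
/-!
Fix `i` and write `Wₙ = ξᵢ + Y` with `Y` independent of `ξᵢ`. By Fubini over the law of `Y` it
suffices to show, for the law `p` of `ξᵢ` and every fixed `y`, that
`∑ₐ a p(a) h(a + y) = ∑ₐ p(a) ∑ₗ g_{l+1} h(a + y + l + 1)`. The recursion says that
`(n + 1) p(n + 1)` is the Cauchy product of `p` and `(g_{l+1})ₗ`, so regrouping the absolutely
convergent double series `∑_{k,l} p(k) g_{l+1} h(k + l + y + 1)` along `k + l = n` turns the right
side into the left. Summing over `i` gives the theorem.
-/

open MeasureTheory ProbabilityTheory Finset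

/-- The paper's Stein operator is `𝒜 h j = ∑ i, steinSum (g i) h j - j * h j`. -/
noncomputable def steinSum (g h : ℕ → ℝ) (m : ℕ) : ℝ :=
  ∑' k, g (k + 1) * h (m + k + 1)

section SteinSum

variable {g h : ℕ → ℝ} {C : ℝ}

lemma steinSum_add (x y : ℕ) :
    steinSum g h (x + y) = steinSum g (fun a => h (a + y)) x :=
  tsum_congr fun k => by rw [show x + y + k + 1 = x + k + 1 + y by omega]

lemma norm_steinSum_term_le (hC : ∀ j, |h j| ≤ C) (m k : ℕ) :
    ‖g (k + 1) * h (m + k + 1)‖ ≤ |g (k + 1)| * C := by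
  rw [norm_mul, Real.norm_eq_abs, Real.norm_eq_abs]
  exact mul_le_mul_of_nonneg_left (hC _) (abs_nonneg _)

lemma abs_steinSum_le (hg : Summable fun k => |g (k + 1)|) (hC : ∀ j, |h j| ≤ C) (m : ℕ) :
    |steinSum g h m| ≤ (∑' k, |g (k + 1)|) * C := by
  have hsum : Summable fun k => ‖g (k + 1) * h (m + k + 1)‖ :=
    .of_nonneg_of_le (fun _ => norm_nonneg _) (norm_steinSum_term_le hC m) (hg.mul_right C)
  calc |steinSum g h m| ≤ ∑' k, ‖g (k + 1) * h (m + k + 1)‖ := norm_tsum_le_tsum_norm hsum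
    _ ≤ ∑' k, |g (k + 1)| * C :=
        hsum.tsum_le_tsum (norm_steinSum_term_le hC m) (hg.mul_right C)
    _ = (∑' k, |g (k + 1)|) * C := tsum_mul_right

lemma HasSum.sum_antidiagonal {M : Type*} [AddCommMonoid M] [TopologicalSpace M]
    [ContinuousAdd M] [RegularSpace M] {f : ℕ × ℕ → M} {s : M} (hf : HasSum f s) :
    HasSum (fun n => ∑ kl ∈ antidiagonal n, f kl) s := by
  refine (HasAntidiagonal.sigmaAntidiagonalEquivProd.hasSum_iff.2 hf).sigma fun n => ?_
  rw [← Finset.sum_finset_coe]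
  exact hasSum_fintype _

lemma hasSum_natCast_mul_of_recursion {p : ℕ → ℝ} (hp : Summable fun k => |p k|)
    (hg : Summable fun k => |g (k + 1)|)
    (hrec : ∀ j : ℕ, ((j : ℝ) + 1) * p (j + 1) = ∑ k ∈ range (j + 1), g (j - k + 1) * p k)
    (hC : ∀ j, |h j| ≤ C) :
    HasSum (fun a => p a * ((a : ℝ) * h a)) (∑' a, p a * steinSum g h a) := by
  set u : ℕ × ℕ → ℝ := fun kl => p kl.1 * (g (kl.2 + 1) * h (kl.1 + kl.2 + 1))
  have hu : Summable u := by
    refine .of_norm_bounded ((summable_mul_of_summable_norm (f := p) (g := fun l => g (l + 1))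
      (by simpa only [Real.norm_eq_abs] using hp)
      (by simpa only [Real.norm_eq_abs] using hg)).norm.mul_right C) fun kl => ?_
    rw [norm_mul (p kl.1), norm_mul (p kl.1), mul_assoc]
    exact mul_le_mul_of_nonneg_left (norm_steinSum_term_le hC _ _) (norm_nonneg _)
  have htsum : ∑' kl, u kl = ∑' a, p a * steinSum g h a := by
    rw [hu.tsum_prod]
    exact tsum_congr fun a => by simp only [u]; exact tsum_mul_left
  have hdiag (n : ℕ) :
      ∑ kl ∈ antidiagonal n, u kl = p (n + 1) * (((n + 1 : ℕ) : ℝ) * h (n + 1)) :=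
    calc ∑ kl ∈ antidiagonal n, u kl
        = ∑ kl ∈ antidiagonal n, g (kl.2 + 1) * p kl.1 * h (n + 1) :=
          sum_congr rfl fun kl hkl => by
            simp only [u]; rw [mem_antidiagonal.1 hkl]; ring
      _ = (∑ k ∈ range (n + 1), g (n - k + 1) * p k) * h (n + 1) := by
          rw [← sum_mul, Nat.sum_antidiagonal_eq_sum_range_succ (fun k l => g (l + 1) * p k)]
      _ = p (n + 1) * (((n + 1 : ℕ) : ℝ) * h (n + 1)) := by rw [← hrec]; push_cast; ring
  rw [← htsum, ← hasSum_nat_add_iff' 1, sum_range_one, Nat.cast_zero, zero_mul, mul_zero,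
    sub_zero]
  simpa only [hdiag] using hu.hasSum.sum_antidiagonal

lemma summable_measureReal_singleton {α : Type*} [MeasurableSpace α] [Countable α]
    [MeasurableSingletonClass α] (μ : Measure α) [IsFiniteMeasure μ] :
    Summable fun a => μ.real {a} := by
  have h1 := integrable_const (1 : ℝ) (μ := μ)
  rw [← Measure.sum_smul_dirac μ] at h1
  simpa [measureReal_def] using h1.summable_of_dirac

lemma integrable_steinSum_comp {α : Type*} [MeasurableSpace α] {μ : Measure α}
    [IsFiniteMeasure μ] {f : α → ℕ} (hf : Measurable f)
    (hg : Summable fun k => |g (k + 1)|) (hC : ∀ j, |h j| ≤ C) :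
    Integrable (fun x => steinSum g h (f x)) μ :=
  .of_bound ((measurable_of_countable (steinSum g h)).comp hf).aestronglyMeasurable _
    (ae_of_all _ fun x => (Real.norm_eq_abs _).trans_le (abs_steinSum_le hg hC (f x)))

lemma integral_natCast_mul_eq_integral_steinSum (μ : Measure ℕ) [IsFiniteMeasure μ]
    (hg : Summable fun k => |g (k + 1)|)
    (hrec : ∀ j : ℕ, ((j : ℝ) + 1) * μ.real {j + 1} =
      ∑ k ∈ range (j + 1), g (j - k + 1) * μ.real {k})
    (hC : ∀ j, |h j| ≤ C) (hint : Integrable (fun a : ℕ => (a : ℝ) * h a) μ) :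
    ∫ a, (a : ℝ) * h a ∂μ = ∫ a, steinSum g h a ∂μ := by
  have hp : Summable fun a => |μ.real {a}| := by
    simpa only [abs_of_nonneg measureReal_nonneg] using summable_measureReal_singleton μ
  have hstein : Integrable (steinSum g h) μ := integrable_steinSum_comp measurable_id hg hC
  rw [integral_countable hint, integral_countable hstein]
  exact (hasSum_natCast_mul_of_recursion hp hg hrec hC).tsum_eq

lemma pm_eq_measureReal_map {Ω : Type*} [MeasurableSpace Ω] {P : Measure Ω} {X : Ω → ℕ}
    (hX : Measurable X) (j : ℕ) : pm P X j = (P.map X).real {j} := by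
  rw [measureReal_def, Measure.map_apply hX (measurableSet_singleton j)]
  rfl

lemma integral_steinSum_add_eq_of_indepFun {Ω : Type*} [MeasurableSpace Ω] {P : Measure Ω}
    [IsProbabilityMeasure P] {X Y : Ω → ℕ} (hX : Measurable X) (hY : Measurable Y)
    (hXY : IndepFun X Y P) (hg : Summable fun k => |g (k + 1)|)
    (hrec : ∀ j : ℕ, ((j : ℝ) + 1) * pm P X (j + 1) =
      ∑ k ∈ range (j + 1), g (j - k + 1) * pm P X k)
    (hC : ∀ j, |h j| ≤ C) (hint : Integrable (fun ω => (X ω : ℝ) * h (X ω + Y ω)) P) :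
    ∫ ω, steinSum g h (X ω + Y ω) ∂P = ∫ ω, (X ω : ℝ) * h (X ω + Y ω) ∂P := by
  set μ := P.map X
  set ν := P.map Y
  have hlaw : P.map (fun ω => (X ω, Y ω)) = μ.prod ν :=
    (indepFun_iff_map_prod_eq_prod_map_map hX.aemeasurable hY.aemeasurable).1 hXY
  have hpush (f : ℕ × ℕ → ℝ) : ∫ ω, f (X ω, Y ω) ∂P = ∫ z, f z ∂(μ.prod ν) := by
    rw [← hlaw, integral_map (hX.prodMk hY).aemeasurable
      (measurable_of_countable f).aestronglyMeasurable]
  have hint₁ : Integrable (fun z : ℕ × ℕ => (z.1 : ℝ) * h (z.1 + z.2)) (μ.prod ν) := by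
    rw [← hlaw]
    exact (integrable_map_measure (measurable_of_countable _).aestronglyMeasurable
      (hX.prodMk hY).aemeasurable).2 hint
  have hint₂ : Integrable (fun z : ℕ × ℕ => steinSum g h (z.1 + z.2)) (μ.prod ν) :=
    integrable_steinSum_comp (measurable_of_countable _) hg hC
  have hrecμ : ∀ j : ℕ, ((j : ℝ) + 1) * μ.real {j + 1} =
      ∑ k ∈ range (j + 1), g (j - k + 1) * μ.real {k} := by
    simpa only [pm_eq_measureReal_map hX] using hrec
  rw [hpush fun z => steinSum g h (z.1 + z.2), hpush fun z => (z.1 : ℝ) * h (z.1 + z.2),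
    integral_prod_symm _ hint₁, integral_prod_symm _ hint₂]
  refine integral_congr_ae ?_
  filter_upwards [hint₁.prod_left_ae] with y hy
  simp only [steinSum_add]
  exact (integral_natCast_mul_eq_integral_steinSum μ hg hrecμ (fun j => hC (j + y)) hy).symm

lemma integrable_natCast_mul_comp_of_le {Ω : Type*} [MeasurableSpace Ω] {P : Measure Ω}
    {X W : Ω → ℕ} (hX : Measurable X) (hWm : Measurable W)
    (hW : Integrable (fun ω => (W ω : ℝ)) P) (hle : ∀ ω, X ω ≤ W ω) (hC : ∀ j, |h j| ≤ C) :
    Integrable (fun ω => (X ω : ℝ) * h (W ω)) P := by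
  refine (hW.mul_const C).mono ((measurable_of_countable fun z : ℕ × ℕ =>
    (z.1 : ℝ) * h z.2).comp (hX.prodMk hWm)).aestronglyMeasurable (ae_of_all _ fun ω => ?_)
  rw [norm_mul, norm_mul, Real.norm_natCast, Real.norm_natCast, Real.norm_eq_abs]
  exact mul_le_mul (Nat.cast_le.2 (hle ω)) ((hC _).trans (le_abs_self C)) (abs_nonneg _)
    (Nat.cast_nonneg _)

end SteinSum

/-- Proposition 3.1: the operator `𝒜 h(j) = ∑_i ∑_k g_{i,k+1} h(j+k+1) − j h(j)` is a Stein
operator for the sum `Wₙ` of independent random variables satisfying the PGF-coefficient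
recursion. -/
theorem stein_operator_for_sum {Ω : Type*} [MeasurableSpace Ω] (P : Measure Ω)
    [IsProbabilityMeasure P] (n : ℕ) (ξ : Fin n → Ω → ℕ) (hmeas : ∀ i, Measurable (ξ i))
    (hindep : iIndepFun ξ P)
    (g : Fin n → ℕ → ℝ)
    (hsum : ∀ i, Summable fun k : ℕ => |g i (k + 1)|)
    (hrec : ∀ i, ∀ j : ℕ, ((j : ℝ) + 1) * pm P (ξ i) (j + 1) =
      ∑ k ∈ Finset.range (j + 1), g i (j - k + 1) * pm P (ξ i) k)
    (hmean : Integrable (fun ω => ((∑ i, ξ i ω : ℕ) : ℝ)) P)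
    (h : ℕ → ℝ) (hbdd : ∃ C, ∀ j, |h j| ≤ C) :
    ∫ ω, (∑ i, ∑' k : ℕ, g i (k + 1) * h ((∑ i, ξ i ω) + k + 1)) ∂P =
      ∫ ω, ((∑ i, ξ i ω : ℕ) : ℝ) * h (∑ i, ξ i ω) ∂P := by
  obtain ⟨C, hC⟩ := hbdd
  have hW : Measurable fun ω => ∑ i, ξ i ω := Finset.measurable_sum _ fun i _ => hmeas i
  have hint (i : Fin n) : Integrable (fun ω => (ξ i ω : ℝ) * h (∑ j, ξ j ω)) P :=
    integrable_natCast_mul_comp_of_le (hmeas i) hW hmean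
      (fun ω => single_le_sum (fun j _ => Nat.zero_le (ξ j ω)) (mem_univ i)) hC
  have hsplit (ω : Ω) : ((∑ i, ξ i ω : ℕ) : ℝ) * h (∑ i, ξ i ω) =
      ∑ i, (ξ i ω : ℝ) * h (∑ j, ξ j ω) := by
    push_cast
    exact sum_mul ..
  change ∫ ω, ∑ i, steinSum (g i) h (∑ j, ξ j ω) ∂P = _
  simp only [hsplit]
  rw [integral_finsetSum _ fun i _ => integrable_steinSum_comp hW (hsum i) hC,
    integral_finsetSum _ fun i _ => hint i]
  refine sum_congr rfl fun i _ => ?_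
  set Y := ∑ j ∈ univ.erase i, ξ j
  have hY (ω : Ω) : ∑ j, ξ j ω = ξ i ω + Y ω := by
    simp only [Y, Finset.sum_apply]
    rw [add_sum_erase _ (fun j => ξ j ω) (mem_univ i)]
  have hXY : IndepFun (ξ i) Y P :=
    (hindep.indepFun_finsetSum_of_notMem hmeas (notMem_erase i univ)).symm
  have hintXY := hint i
  simp only [hY] at hintXY ⊢
  exact integral_steinSum_add_eq_of_indepFun (hmeas i) (by fun_prop)
    hXY (hsum i) (hrec i) hC hintXY
end

section
/- Let X be a Poisson random variable with parameter λ > 0 and Y an independent geometric random variable with parameter p ∈ (0,1), q = 1 − p, and set Z = X + Y. Then for every bounded function h : ℤ₊ → ℝ, E[ λ·h(Z+1) + ∑_{k=0}^{∞} q^{k+1}·h(Z+k+1) ] = E[ Z·h(Z) ]. Equivalently, the operator 𝒜 h(j) = λ h(j+1) − j h(j) + ∑_{k=0}^{∞} q^{k+1} h(j+k+1) satisfies E[𝒜 h(Z)] = 0. -/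
open MeasureTheory ProbabilityTheory Finset

/-!
By independence both expectations are sums against the joint weights `π i * γ k`, with `π` the
Poisson and `γ` the geometric weights. The identity `λ π n = (n + 1) π (n + 1)` turns
`λ h (X + Y + 1)`, summed over `X` first, into `X h (X + Y)`. The identity
`γ k * q ^ (m + 1) = γ (k + m + 1)` turns the series in the operator, summed over `Y` first, into a
sum over pairs `(k, m)` of a function of `k + m + 1`; each `n` is hit `n` times, giving
`Y h (X + Y)`.
-/

open Real Nat

lemma tsum_succ_mul_apply_succ (f : ℕ → ℝ) :
    ∑' n : ℕ, ((n : ℝ) + 1) * f (n + 1) = ∑' n : ℕ, (n : ℝ) * f n := by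
  by_cases hf : Summable fun n : ℕ => (n : ℝ) * f n
  · simp [hf.tsum_eq_zero_add]
  · have hf' : ¬ Summable fun n : ℕ => ((n : ℝ) + 1) * f (n + 1) := by
      simpa using mt (summable_nat_add_iff 1).1 hf
    rw [tsum_eq_zero_of_not_summable hf, tsum_eq_zero_of_not_summable hf']

lemma Summable.tsum_prod_add_eq_tsum_succ_mul {G : ℕ → ℝ}
    (hG : Summable fun x : ℕ × ℕ => G (x.1 + x.2)) :
    ∑' x : ℕ × ℕ, G (x.1 + x.2) = ∑' n : ℕ, ((n : ℝ) + 1) * G n := by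
  let e := HasAntidiagonal.sigmaAntidiagonalEquivProd (A := ℕ)
  rw [← e.tsum_eq, Summable.tsum_sigma (by exact e.summable_iff.2 hG)]
  refine tsum_congr fun n => ?_
  have hfiber : ∀ c : antidiagonal n, G ((e ⟨n, c⟩).1 + (e ⟨n, c⟩).2) = G n := fun c =>
    congrArg G (mem_antidiagonal.1 c.2)
  rw [tsum_congr hfiber, tsum_const, Nat.card_eq_fintype_card, Fintype.card_coe,
    Nat.card_antidiagonal, nsmul_eq_mul]
  push_cast
  ring

lemma Summable.tsum_mul_mul_eq_tsum_mul_tsum {α β : Type*} {a : α → ℝ} {b : β → ℝ}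
    {F : α × β → ℝ} (hF : Summable fun x => a x.1 * b x.2 * F x) :
    ∑' x, a x.1 * b x.2 * F x = ∑' i, a i * ∑' k, b k * F (i, k) := by
  simp_rw [hF.tsum_prod, ← tsum_mul_left, mul_assoc]

lemma Summable.tsum_mul_mul_eq_tsum_mul_tsum' {α β : Type*} {a : α → ℝ} {b : β → ℝ}
    {F : α × β → ℝ} (hF : Summable fun x => a x.1 * b x.2 * F x) :
    ∑' x, a x.1 * b x.2 * F x = ∑' k, b k * ∑' i, a i * F (i, k) := by
  rw [hF.tsum_prod, ← Summable.tsum_comm (f := fun i k => a i * b k * F (i, k)) hF]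
  simp_rw [← tsum_mul_left]
  exact tsum_congr fun k => tsum_congr fun i => by ring

-- No integrability hypothesis: for real-valued `g`, both sides vanish when `g ∘ Z` is not
-- integrable.
lemma integral_comp_eq_tsum {Ω α : Type*} [MeasurableSpace Ω] [MeasurableSpace α] [Countable α]
    [MeasurableSingletonClass α] (P : Measure Ω) [IsFiniteMeasure P] {Z : Ω → α}
    (hZ : Measurable Z) (g : α → ℝ) :
    ∫ ω, g (Z ω) ∂P = ∑' a, (P (Z ⁻¹' {a})).toReal * g a := by
  rw [← integral_map hZ.aemeasurable (.of_discrete), ← Measure.sum_smul_dirac (P.map Z),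
    integral_sum_dirac fun a => measure_ne_top _ _]
  simp [Measure.map_apply hZ (measurableSet_singleton _)]

lemma ProbabilityTheory.IndepFun.measure_prodMk_preimage_singleton {Ω α β : Type*}
    [MeasurableSpace Ω] [MeasurableSpace α] [MeasurableSpace β] [MeasurableSingletonClass α]
    [MeasurableSingletonClass β] {P : Measure Ω} {X : Ω → α} {Y : Ω → β}
    (hXY : IndepFun X Y P) (x : α × β) :
    P ((fun ω => (X ω, Y ω)) ⁻¹' {x}) = P (X ⁻¹' {x.1}) * P (Y ⁻¹' {x.2}) := by
  have hpre : (fun ω => (X ω, Y ω)) ⁻¹' {x} = X ⁻¹' {x.1} ∩ Y ⁻¹' {x.2} := by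
    ext ω; simp [Prod.ext_iff]
  rw [hpre, hXY.measure_inter_preimage_eq_mul _ _ (measurableSet_singleton _)
    (measurableSet_singleton _)]

noncomputable def poissonWeight (lam : ℝ) (n : ℕ) : ℝ := exp (-lam) * lam ^ n / n !

noncomputable def geometricWeight (p : ℝ) (n : ℕ) : ℝ := (1 - p) ^ n * p

lemma poissonWeight_nonneg {lam : ℝ} (hlam : 0 ≤ lam) (n : ℕ) : 0 ≤ poissonWeight lam n := by
  unfold poissonWeight; positivity

lemma succ_mul_poissonWeight_succ (lam : ℝ) (n : ℕ) :
    ((n : ℝ) + 1) * poissonWeight lam (n + 1) = lam * poissonWeight lam n := by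
  simp only [poissonWeight, factorial_succ, pow_succ, cast_mul, cast_succ]
  field_simp

lemma summable_succ_mul_poissonWeight (lam : ℝ) :
    Summable fun n : ℕ => ((n : ℝ) + 1) * poissonWeight lam n := by
  have hweight : Summable (poissonWeight lam) := by
    refine ((Real.summable_pow_div_factorial lam).mul_left (exp (-lam))).congr fun n => ?_
    rw [poissonWeight, mul_div_assoc]
  have hmean : Summable fun n : ℕ => (n : ℝ) * poissonWeight lam n := by
    rw [← summable_nat_add_iff 1]
    simpa only [cast_add, cast_one, succ_mul_poissonWeight_succ] using hweight.mul_left lam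
  simpa only [add_mul, one_mul] using hmean.add hweight

lemma tsum_poissonWeight_mul_apply_succ (lam : ℝ) (g : ℕ → ℝ) :
    ∑' n : ℕ, poissonWeight lam n * (lam * g (n + 1)) =
      ∑' n : ℕ, poissonWeight lam n * (n * g n) :=
  calc ∑' n : ℕ, poissonWeight lam n * (lam * g (n + 1))
      = ∑' n : ℕ, ((n : ℝ) + 1) * (poissonWeight lam (n + 1) * g (n + 1)) :=
        tsum_congr fun n => by rw [← mul_assoc ((n : ℝ) + 1), succ_mul_poissonWeight_succ]; ring
    _ = ∑' n : ℕ, (n : ℝ) * (poissonWeight lam n * g n) :=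
        tsum_succ_mul_apply_succ fun n => poissonWeight lam n * g n
    _ = ∑' n : ℕ, poissonWeight lam n * (n * g n) := tsum_congr fun n => mul_left_comm _ _ _

section Geometric

variable {p : ℝ}

lemma geometricWeight_nonneg (hp0 : 0 ≤ p) (hp1 : p ≤ 1) (n : ℕ) : 0 ≤ geometricWeight p n :=
  mul_nonneg (pow_nonneg (sub_nonneg.2 hp1) n) hp0

lemma geometricWeight_mul_pow_succ (p : ℝ) (k m : ℕ) :
    geometricWeight p k * (1 - p) ^ (m + 1) = geometricWeight p (k + m + 1) := by
  simp only [geometricWeight, add_assoc, pow_add]; ring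

lemma summable_succ_mul_geometricWeight (hp0 : 0 < p) (hp1 : p ≤ 1) :
    Summable fun n : ℕ => ((n : ℝ) + 1) * geometricWeight p n := by
  have hq : ‖1 - p‖ < 1 := by rw [Real.norm_eq_abs, abs_lt]; constructor <;> linarith
  simpa [geometricWeight, add_mul, mul_assoc] using
    ((summable_pow_mul_geometric_of_norm_lt_one 1 hq).add
      (summable_geometric_of_norm_lt_one hq)).mul_right p

lemma abs_tsum_pow_succ_mul_le (hp0 : 0 < p) (hp1 : p ≤ 1) {g : ℕ → ℝ} {C : ℝ}
    (hg : ∀ n, |g n| ≤ C) (j : ℕ) :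
    |∑' m : ℕ, (1 - p) ^ (m + 1) * g (j + m + 1)| ≤ C / p := by
  have hq0 : 0 ≤ 1 - p := by linarith
  have hq1 : 1 - p < 1 := by linarith
  have := tsum_of_norm_bounded (f := fun m => (1 - p) ^ (m + 1) * g (j + m + 1))
    ((hasSum_geometric_of_lt_one hq0 hq1).mul_left C) fun m => by
    rw [norm_mul, norm_pow, Real.norm_of_nonneg hq0, Real.norm_eq_abs, mul_comm C]
    exact mul_le_mul (pow_le_pow_of_le_one hq0 hq1.le m.le_succ) (hg _) (abs_nonneg _)
      (pow_nonneg hq0 _)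
  simpa [div_eq_mul_inv] using this

lemma tsum_geometricWeight_mul_tsum (hp0 : 0 < p) (hp1 : p ≤ 1) {g : ℕ → ℝ} {C : ℝ}
    (hg : ∀ n, |g n| ≤ C) :
    ∑' k : ℕ, geometricWeight p k * ∑' m : ℕ, (1 - p) ^ (m + 1) * g (k + m + 1) =
      ∑' k : ℕ, geometricWeight p k * (k * g k) := by
  have hq0 : 0 ≤ 1 - p := by linarith
  have hq1 : 1 - p < 1 := by linarith
  set G : ℕ → ℝ := fun n => geometricWeight p n * g n
  have hG_le : ∀ n, ‖G n‖ ≤ C * (1 - p) ^ n := fun n => by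
    have hC0 : 0 ≤ C := (abs_nonneg _).trans (hg 0)
    rw [Real.norm_eq_abs, abs_mul, abs_of_nonneg (geometricWeight_nonneg hp0.le hp1 n)]
    calc geometricWeight p n * |g n| ≤ geometricWeight p n * C :=
          mul_le_mul_of_nonneg_left (hg n) (geometricWeight_nonneg hp0.le hp1 n)
      _ ≤ C * (1 - p) ^ n := by
          rw [geometricWeight]; nlinarith [mul_nonneg hC0 (pow_nonneg hq0 n)]
  have hG : Summable fun x : ℕ × ℕ => G (x.1 + x.2 + 1) := by
    have hgeom := summable_geometric_of_lt_one hq0 hq1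
    refine Summable.of_norm_bounded ((hgeom.mul_of_nonneg hgeom (fun _ => by positivity)
      (fun _ => by positivity)).mul_left C) fun x => (hG_le _).trans ?_
    rw [← pow_add]
    exact mul_le_mul_of_nonneg_left (pow_le_pow_of_le_one hq0 hq1.le (by omega))
      ((abs_nonneg _).trans (hg 0))
  calc ∑' k : ℕ, geometricWeight p k * ∑' m : ℕ, (1 - p) ^ (m + 1) * g (k + m + 1)
      = ∑' k : ℕ, ∑' m : ℕ, G (k + m + 1) := by
        simp_rw [← tsum_mul_left, ← mul_assoc, geometricWeight_mul_pow_succ]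
        rfl
    _ = ∑' x : ℕ × ℕ, G (x.1 + x.2 + 1) := hG.tsum_prod.symm
    _ = ∑' n : ℕ, ((n : ℝ) + 1) * G (n + 1) :=
        hG.tsum_prod_add_eq_tsum_succ_mul (G := fun n => G (n + 1))
    _ = ∑' n : ℕ, (n : ℝ) * G n := tsum_succ_mul_apply_succ G
    _ = ∑' k : ℕ, geometricWeight p k * (k * g k) := tsum_congr fun n => mul_left_comm _ _ _

end Geometric

section Joint

variable {lam p : ℝ}

lemma summable_poissonWeight_mul_geometricWeight_mul (hlam : 0 ≤ lam) (hp0 : 0 < p)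
    (hp1 : p ≤ 1) {F : ℕ × ℕ → ℝ} {D : ℝ} (hF : ∀ x, |F x| ≤ D * ((x.1 + 1) * (x.2 + 1))) :
    Summable fun x : ℕ × ℕ => poissonWeight lam x.1 * geometricWeight p x.2 * F x := by
  have hπ := poissonWeight_nonneg hlam
  have hγ := geometricWeight_nonneg hp0.le hp1
  refine Summable.of_norm_bounded (((summable_succ_mul_poissonWeight lam).mul_of_nonneg
    (summable_succ_mul_geometricWeight hp0 hp1) (fun n => by positivity [hπ n])
    (fun n => by positivity [hγ n])).mul_left D) fun x => ?_
  rw [Real.norm_eq_abs, abs_mul, abs_of_nonneg (mul_nonneg (hπ _) (hγ _))]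
  calc poissonWeight lam x.1 * geometricWeight p x.2 * |F x|
      ≤ poissonWeight lam x.1 * geometricWeight p x.2 * (D * ((x.1 + 1) * (x.2 + 1))) :=
        mul_le_mul_of_nonneg_left (hF x) (mul_nonneg (hπ _) (hγ _))
    _ = _ := by ring

lemma tsum_poissonWeight_mul_geometricWeight_stein (hlam : 0 ≤ lam) (hp0 : 0 < p)
    (hp1 : p ≤ 1) {h : ℕ → ℝ} {C : ℝ} (hC : ∀ n, |h n| ≤ C) :
    ∑' x : ℕ × ℕ, poissonWeight lam x.1 * geometricWeight p x.2 *
        (lam * h (x.1 + x.2 + 1) + ∑' m : ℕ, (1 - p) ^ (m + 1) * h (x.1 + x.2 + m + 1)) =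
      ∑' x : ℕ × ℕ, poissonWeight lam x.1 * geometricWeight p x.2 *
        (((x.1 + x.2 : ℕ) : ℝ) * h (x.1 + x.2)) := by
  have hC0 : 0 ≤ C := (abs_nonneg _).trans (hC 0)
  have hone : ∀ x : ℕ × ℕ, (1 : ℝ) ≤ (x.1 + 1) * (x.2 + 1) := fun x => by nlinarith
  have hfst_le : ∀ x : ℕ × ℕ, (x.1 : ℝ) ≤ (x.1 + 1) * (x.2 + 1) := fun x => by nlinarith
  have hsnd_le : ∀ x : ℕ × ℕ, (x.2 : ℝ) ≤ (x.1 + 1) * (x.2 + 1) := fun x => by nlinarith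
  have summable := @summable_poissonWeight_mul_geometricWeight_mul lam p hlam hp0 hp1
  have hshift := summable (F := fun x => lam * h (x.1 + x.2 + 1)) (D := lam * C) fun x => by
    rw [abs_mul, abs_of_nonneg hlam]
    exact (mul_le_mul_of_nonneg_left (hC _) hlam).trans
      (le_mul_of_one_le_right (by positivity) (hone x))
  have htail := summable (D := C / p) fun x =>
    (abs_tsum_pow_succ_mul_le hp0 hp1 hC (x.1 + x.2)).trans
      (le_mul_of_one_le_right (by positivity) (hone x))
  have hfst := summable (F := fun x => x.1 * h (x.1 + x.2)) (D := C) fun x => by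
    rw [abs_mul, Nat.abs_cast, mul_comm C]
    exact mul_le_mul (hfst_le x) (hC _) (abs_nonneg _) (by positivity)
  have hsnd := summable (F := fun x => x.2 * h (x.1 + x.2)) (D := C) fun x => by
    rw [abs_mul, Nat.abs_cast, mul_comm C]
    exact mul_le_mul (hsnd_le x) (hC _) (abs_nonneg _) (by positivity)
  have hpoisson : ∑' x : ℕ × ℕ, poissonWeight lam x.1 * geometricWeight p x.2 *
      (lam * h (x.1 + x.2 + 1)) = ∑' x : ℕ × ℕ, poissonWeight lam x.1 * geometricWeight p x.2 *
      (x.1 * h (x.1 + x.2)) := by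
    rw [hshift.tsum_mul_mul_eq_tsum_mul_tsum', hfst.tsum_mul_mul_eq_tsum_mul_tsum']
    refine tsum_congr fun k => congrArg _ ?_
    simpa only [add_right_comm] using tsum_poissonWeight_mul_apply_succ lam fun n => h (n + k)
  have hgeometric : ∑' x : ℕ × ℕ, poissonWeight lam x.1 * geometricWeight p x.2 *
      ∑' m : ℕ, (1 - p) ^ (m + 1) * h (x.1 + x.2 + m + 1) =
      ∑' x : ℕ × ℕ, poissonWeight lam x.1 * geometricWeight p x.2 * (x.2 * h (x.1 + x.2)) := by
    rw [htail.tsum_mul_mul_eq_tsum_mul_tsum, hsnd.tsum_mul_mul_eq_tsum_mul_tsum]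
    refine tsum_congr fun i => congrArg _ ?_
    simpa only [add_assoc] using
      tsum_geometricWeight_mul_tsum hp0 hp1 (g := fun n => h (i + n)) fun n => hC _
  simp_rw [mul_add]
  rw [hshift.tsum_add htail, hpoisson, hgeometric, ← hfst.tsum_add hsnd]
  exact tsum_congr fun x => by push_cast; ring

end Joint

/-- Proposition 3.2: the operator `𝒜 h(j) = λ h(j+1) − j h(j) + ∑_k q^{k+1} h(j+k+1)` is a
Stein operator for `Z = X + Y`, with `X` Poisson(λ) and `Y` an independent geometric(p). -/
theorem stein_operator_poisson_geometric {Ω : Type*} [MeasurableSpace Ω] (P : Measure Ω)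
    [IsProbabilityMeasure P] (lam p : ℝ) (hlam : 0 < lam) (hp : p ∈ Set.Ioo (0 : ℝ) 1)
    (X Y : Ω → ℕ) (hX : Measurable X) (hY : Measurable Y)
    (hXpmf : ∀ k : ℕ, pm P X k = Real.exp (-lam) * lam ^ k / k.factorial)
    (hYpmf : ∀ k : ℕ, pm P Y k = (1 - p) ^ k * p)
    (hindep : IndepFun X Y P)
    (h : ℕ → ℝ) (hbdd : ∃ C, ∀ j, |h j| ≤ C) :
    ∫ ω, (lam * h (X ω + Y ω + 1) + ∑' k : ℕ, (1 - p) ^ (k + 1) * h (X ω + Y ω + k + 1)) ∂P =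
      ∫ ω, ((X ω + Y ω : ℕ) : ℝ) * h (X ω + Y ω) ∂P := by
  obtain ⟨C, hC⟩ := hbdd
  have hlaw (F : ℕ × ℕ → ℝ) : ∫ ω, F (X ω, Y ω) ∂P =
      ∑' x : ℕ × ℕ, poissonWeight lam x.1 * geometricWeight p x.2 * F x := by
    rw [integral_comp_eq_tsum P (hX.prodMk hY)]
    refine tsum_congr fun x => ?_
    rw [hindep.measure_prodMk_preimage_singleton, ENNReal.toReal_mul]
    exact congrArg (· * F x) (congrArg₂ (· * ·) (hXpmf x.1) (hYpmf x.2))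
  calc _ = _ := hlaw fun x => lam * h (x.1 + x.2 + 1) +
          ∑' k : ℕ, (1 - p) ^ (k + 1) * h (x.1 + x.2 + k + 1)
    _ = _ := tsum_poissonWeight_mul_geometricWeight_stein hlam.le hp.1 hp.2.le hC
    _ = _ := (hlaw fun x => ((x.1 + x.2 : ℕ) : ℝ) * h (x.1 + x.2)).symm
end

section
/- Let ξ₁,…,ξₙ be independent Bernoulli random variables with P(ξᵢ = 1) = pᵢ = 1 − P(ξᵢ = 0), where pᵢ ∈ [0,1], set Wₙ = ξ₁ + ⋯ + ξₙ and μ = ∑_{i=1}^{n} pᵢ, and assume μ > 0. Let X be a Poisson random variable with parameter μ. Then d_TV(Wₙ, X) ≤ (∑_{i=1}^{n} pᵢ²) / max(1, μ). -/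
open MeasureTheory ProbabilityTheory Finset

/-- Total variation distance between the laws of two `ℕ`-valued random variables. -/
noncomputable def dTV {Ω : Type*} [MeasurableSpace Ω] (P : Measure Ω) (X Y : Ω → ℕ) : ℝ :=
  (1 / 2) * ∑' j : ℕ, |pm P X j - pm P Y j|

/-!
Stein–Chen method. For a test function `0 ≤ h ≤ 1` let `f` solve the Stein equation
`μ f (k + 1) - k f k = h k - Po(μ)(h)`, so that `E h(W) - Po(μ)(h) = E[μ f(W + 1) - W f(W)]`.
Writing `W = Wᵢ + ξᵢ` with `Wᵢ` independent of `ξᵢ`, the right side equals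
`∑ pᵢ² E[f(Wᵢ + 2) - f(Wᵢ + 1)]`, and the increments of `f` away from `0` are bounded by
`(1 - e^{-μ}) / μ ≤ 1 / max(1, μ)`. The indicator of `{j | Po(μ){j} < P(W = j)}` turns
`E h(W) - Po(μ)(h)` into the total variation distance.
-/

open Real
open scoped Nat

lemma half_tsum_abs_sub_eq {ι : Type*} {a b : ι → ℝ} (ha : Summable a) (hb : Summable b)
    (hab : ∑' j, a j = ∑' j, b j) :
    1 / 2 * ∑' j, |a j - b j|
      = ∑' j, {j | b j < a j}.indicator 1 j * a j - ∑' j, {j | b j < a j}.indicator 1 j * b j := by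
  set ind := {j | b j < a j}.indicator (1 : ι → ℝ)
  have hind : ∀ {x : ι → ℝ}, Summable x → Summable fun j => ind j * x j := fun hx =>
    hx.abs.of_norm_bounded fun j => by
      rw [Real.norm_eq_abs, abs_mul]
      refine mul_le_of_le_one_left (abs_nonneg _) ?_
      by_cases hj : b j < a j <;> simp [ind, hj]
  have hpt : ∀ j, |a j - b j| = 2 * (ind j * a j - ind j * b j) - (a j - b j) := by
    intro j
    by_cases hj : b j < a j
    · simp only [ind, Set.indicator_of_mem (show j ∈ {j | b j < a j} from hj), Pi.one_apply,
        abs_of_pos (sub_pos.2 hj)]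
      ring
    · simp only [ind, Set.indicator_of_notMem (show j ∉ {j | b j < a j} from hj),
        abs_of_nonpos (sub_nonpos.2 (not_lt.1 hj))]
      ring
  rw [tsum_congr hpt, (((hind ha).sub (hind hb)).mul_left 2).tsum_sub (ha.sub hb), tsum_mul_left,
    (hind ha).tsum_sub (hind hb), ha.tsum_sub hb, hab]
  ring

/-- Mathlib's `poissonMeasure` is parametrised by `r : ℝ≥0`; here the parameter is real. -/
noncomputable def poissonMass (l : ℝ) (k : ℕ) : ℝ := exp (-l) * l ^ k / k !

noncomputable def poissonCDF (l : ℝ) (k : ℕ) : ℝ := ∑ j ∈ range (k + 1), poissonMass l j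

section Poisson

variable {l : ℝ}

lemma poissonMass_pos (hl : 0 < l) (k : ℕ) : 0 < poissonMass l k := by
  unfold poissonMass; positivity

lemma poissonMass_nonneg (hl : 0 ≤ l) (k : ℕ) : 0 ≤ poissonMass l k := by
  unfold poissonMass; positivity

lemma poissonMass_zero (l : ℝ) : poissonMass l 0 = exp (-l) := by
  simp [poissonMass]

lemma succ_mul_poissonMass_succ (l : ℝ) (k : ℕ) :
    (k + 1 : ℝ) * poissonMass l (k + 1) = l * poissonMass l k := by
  simp only [poissonMass, Nat.factorial_succ, pow_succ]
  push_cast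
  field_simp

lemma hasSum_poissonMass (hl : 0 ≤ l) : HasSum (poissonMass l) 1 :=
  hasSum_one_poissonMeasure ⟨l, hl⟩

/-- The ratio `poissonMass l (j + 1) / poissonMass l j = l / (j + 1)` is nonincreasing in `j`. -/
lemma poissonMass_succ_mul_le_of_le (hl : 0 ≤ l) {m k : ℕ} (hmk : m ≤ k) :
    poissonMass l (k + 1) * poissonMass l m ≤ poissonMass l (m + 1) * poissonMass l k := by
  have hmk' : (m : ℝ) + 1 ≤ k + 1 := by exact_mod_cast Nat.succ_le_succ hmk
  have hx : 0 ≤ l * poissonMass l k * poissonMass l m :=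
    mul_nonneg (mul_nonneg hl (poissonMass_nonneg hl k)) (poissonMass_nonneg hl m)
  refine le_of_mul_le_mul_left ?_ (by positivity : (0 : ℝ) < (k + 1) * (m + 1))
  calc ((k : ℝ) + 1) * (m + 1) * (poissonMass l (k + 1) * poissonMass l m)
      = (m + 1) * (l * poissonMass l k * poissonMass l m) := by
        linear_combination ((m : ℝ) + 1) * poissonMass l m * succ_mul_poissonMass_succ l k
    _ ≤ (k + 1) * (l * poissonMass l k * poissonMass l m) := by gcongr
    _ = (k + 1) * (m + 1) * (poissonMass l (m + 1) * poissonMass l k) := by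
        linear_combination -((k : ℝ) + 1) * poissonMass l k * succ_mul_poissonMass_succ l m

lemma one_sub_poissonCDF (hl : 0 ≤ l) (k : ℕ) :
    1 - poissonCDF l k = ∑' i, poissonMass l (i + (k + 1)) := by
  rw [← (hasSum_poissonMass hl).tsum_eq, poissonCDF,
    ← (hasSum_poissonMass hl).summable.sum_add_tsum_nat_add (k + 1)]
  ring

lemma poissonCDF_le_one (hl : 0 ≤ l) (k : ℕ) : poissonCDF l k ≤ 1 := by
  have htail : 0 ≤ ∑' i, poissonMass l (i + (k + 1)) := tsum_nonneg fun i => poissonMass_nonneg hl _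
  linarith [one_sub_poissonCDF hl k]

lemma poissonCDF_nonneg (hl : 0 ≤ l) (k : ℕ) : 0 ≤ poissonCDF l k :=
  sum_nonneg fun j _ => poissonMass_nonneg hl j

lemma one_sub_poissonCDF_div_succ_le (hl : 0 < l) (k : ℕ) :
    (1 - poissonCDF l (k + 1)) / poissonMass l (k + 1) ≤ (1 - poissonCDF l k) / poissonMass l k := by
  rw [div_le_div_iff₀ (poissonMass_pos hl _) (poissonMass_pos hl _), one_sub_poissonCDF hl.le,
    one_sub_poissonCDF hl.le, ← tsum_mul_right, ← tsum_mul_right]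
  have hsum := (hasSum_poissonMass hl.le).summable
  refine Summable.tsum_le_tsum (fun i => ?_) (((summable_nat_add_iff _).2 hsum).mul_right _)
    (((summable_nat_add_iff _).2 hsum).mul_right _)
  have := poissonMass_succ_mul_le_of_le hl.le (Nat.le_add_left k (i + 1))
  rw [show i + (k + 1 + 1) = i + 1 + k + 1 by ring, show i + (k + 1) = i + 1 + k by ring]
  linarith

lemma poissonCDF_div_le_succ (hl : 0 < l) (k : ℕ) :
    poissonCDF l k / poissonMass l k ≤ poissonCDF l (k + 1) / poissonMass l (k + 1) := by
  rw [div_le_div_iff₀ (poissonMass_pos hl _) (poissonMass_pos hl _)]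
  calc poissonCDF l k * poissonMass l (k + 1)
      = ∑ i ∈ range (k + 1), poissonMass l (k + 1) * poissonMass l i := by
        rw [poissonCDF, sum_mul]; simp only [mul_comm]
    _ ≤ ∑ i ∈ range (k + 1), poissonMass l (i + 1) * poissonMass l k :=
        sum_le_sum fun i hi =>
          poissonMass_succ_mul_le_of_le hl.le (Nat.lt_succ_iff.1 (mem_range.1 hi))
    _ ≤ poissonCDF l (k + 1) * poissonMass l k := by
        rw [← sum_mul, poissonCDF, sum_range_succ' _ (k + 1)]
        refine mul_le_mul_of_nonneg_right ?_ (poissonMass_nonneg hl.le k)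
        linarith [poissonMass_nonneg hl.le 0]

lemma mul_poissonCDF_le (hl : 0 ≤ l) (k : ℕ) :
    l * poissonCDF l k ≤ (k + 1) * (poissonCDF l (k + 1) - exp (-l)) := by
  rw [poissonCDF, poissonCDF, sum_range_succ' _ (k + 1), poissonMass_zero, add_sub_cancel_right,
    mul_sum, mul_sum]
  refine sum_le_sum fun i hi => ?_
  rw [← succ_mul_poissonMass_succ]
  have : (i : ℝ) ≤ k := by exact_mod_cast Nat.lt_succ_iff.1 (mem_range.1 hi)
  gcongr
  exact poissonMass_nonneg hl _

lemma poissonMass_succ_mul_add_le (hl : 0 < l) (k : ℕ) :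
    poissonMass l (k + 1) * ((1 - poissonCDF l (k + 1)) / poissonMass l (k + 1)
      + poissonCDF l k / poissonMass l k) ≤ 1 - exp (-l) := by
  have hk := poissonMass_pos hl k
  have hk1 := poissonMass_pos hl (k + 1)
  have hratio : poissonMass l (k + 1) * (poissonCDF l k / poissonMass l k)
      = l * poissonCDF l k / (k + 1) := by
    field_simp
    linear_combination poissonCDF l k * succ_mul_poissonMass_succ l k
  have hmain : l * poissonCDF l k / (k + 1) ≤ poissonCDF l (k + 1) - exp (-l) := by
    rw [div_le_iff₀ (by positivity)]
    linarith [mul_poissonCDF_le hl.le k]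
  rw [mul_add, hratio, mul_div_cancel₀ _ hk1.ne']
  linarith

lemma one_sub_exp_neg_div_le_one_div_max {x : ℝ} (hx : 0 < x) :
    (1 - exp (-x)) / x ≤ 1 / max 1 x := by
  rcases le_total x 1 with hx1 | hx1
  · rw [max_eq_left hx1, div_le_div_iff₀ hx one_pos]
    linarith [add_one_le_exp (-x)]
  · rw [max_eq_right hx1]
    gcongr
    linarith [exp_pos (-x)]

end Poisson

/-- The value at `0` is immaterial: it enters the Stein equation `steinSolution_eq` only
multiplied by `0`. -/
noncomputable def steinSolution (l : ℝ) (g : ℕ → ℝ) : ℕ → ℝ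
  | 0 => 0
  | k + 1 => (∑ j ∈ range (k + 1), g j * poissonMass l j) / (l * poissonMass l k)

section Stein

variable {l : ℝ}

lemma steinSolution_eq (hl : 0 < l) (g : ℕ → ℝ) (k : ℕ) :
    l * steinSolution l g (k + 1) - k * steinSolution l g k = g k := by
  have hk := poissonMass_pos hl k
  cases k with
  | zero =>
    simp only [steinSolution, zero_add, sum_range_one, CharP.cast_eq_zero, zero_mul, sub_zero]
    field_simp
  | succ k =>
    have hden : l * poissonMass l k = (k + 1) * poissonMass l (k + 1) :=
      (succ_mul_poissonMass_succ l k).symm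
    simp only [steinSolution, sum_range_succ _ (k + 1), hden]
    push_cast
    field_simp
    ring

lemma steinSolution_neg (l : ℝ) (g : ℕ → ℝ) :
    steinSolution l (fun j => -g j) = -steinSolution l g := by
  funext k
  cases k <;> simp [steinSolution, neg_div]

lemma mul_steinSolution_sub_const_succ (hl : 0 < l) (h : ℕ → ℝ) (c : ℝ) (k : ℕ) :
    l * steinSolution l (fun j => h j - c) (k + 1)
      = (∑ j ∈ range (k + 1), h j * poissonMass l j) * ((1 - poissonCDF l k) / poissonMass l k)
        - (c - ∑ j ∈ range (k + 1), h j * poissonMass l j) * (poissonCDF l k / poissonMass l k) := by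
  have hk := poissonMass_pos hl k
  simp only [steinSolution, sub_mul, sum_sub_distrib, ← mul_sum, poissonCDF]
  field_simp
  ring

lemma summable_mul_poissonMass (hl : 0 ≤ l) {h : ℕ → ℝ} (h0 : ∀ j, 0 ≤ h j) (h1 : ∀ j, h j ≤ 1) :
    Summable fun j => h j * poissonMass l j :=
  (hasSum_poissonMass hl).summable.of_nonneg_of_le
    (fun j => mul_nonneg (h0 j) (poissonMass_nonneg hl j))
    (fun j => mul_le_of_le_one_left (poissonMass_nonneg hl j) (h1 j))

lemma mul_steinSolution_succ_sub_le (hl : 0 < l) {h : ℕ → ℝ} (h0 : ∀ j, 0 ≤ h j)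
    (h1 : ∀ j, h j ≤ 1) {c : ℝ} (hc : ∑' i, h i * poissonMass l i = c) (k : ℕ) :
    l * (steinSolution l (fun j => h j - c) (k + 2) - steinSolution l (fun j => h j - c) (k + 1))
      ≤ 1 - exp (-l) := by
  set S : ℕ → ℝ := fun k => ∑ j ∈ range (k + 1), h j * poissonMass l j
  set U : ℕ → ℝ := fun k => poissonCDF l k / poissonMass l k
  set V : ℕ → ℝ := fun k => (1 - poissonCDF l k) / poissonMass l k
  have hS0 : 0 ≤ S k := sum_nonneg fun j _ => mul_nonneg (h0 j) (poissonMass_nonneg hl.le j)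
  have hSc : S (k + 1) ≤ c := hc ▸ (summable_mul_poissonMass hl.le h0 h1).sum_le_tsum _
    fun j _ => mul_nonneg (h0 j) (poissonMass_nonneg hl.le j)
  have hV : V (k + 1) ≤ V k := one_sub_poissonCDF_div_succ_le hl k
  have hU : U k ≤ U (k + 1) := poissonCDF_div_le_succ hl k
  have hB : poissonMass l (k + 1) * (V (k + 1) + U k) ≤ 1 - exp (-l) :=
    poissonMass_succ_mul_add_le hl k
  have hB0 : 0 ≤ poissonMass l (k + 1) * (V (k + 1) + U k) :=
    mul_nonneg (poissonMass_nonneg hl.le _) (add_nonneg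
      (div_nonneg (sub_nonneg.2 (poissonCDF_le_one hl.le _)) (poissonMass_nonneg hl.le _))
      (div_nonneg (poissonCDF_nonneg hl.le _) (poissonMass_nonneg hl.le _)))
  -- `l f (k + 1) = S k * V k - (c - S k) * U k`; as `V` decreases and `U` increases, only the
  -- term carrying `h (k + 1)` can be positive.
  calc _ = S k * (V (k + 1) - V k) - (c - S (k + 1)) * (U (k + 1) - U k)
        + h (k + 1) * (poissonMass l (k + 1) * (V (k + 1) + U k)) := by
        rw [mul_sub, mul_steinSolution_sub_const_succ hl, mul_steinSolution_sub_const_succ hl]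
        simp only [S, U, V, sum_range_succ _ (k + 1)]
        ring
    _ ≤ 0 - 0 + 1 * (1 - exp (-l)) := by
        gcongr
        · exact mul_nonpos_of_nonneg_of_nonpos hS0 (by linarith)
        · exact mul_nonneg (by linarith) (by linarith)
        · exact h1 _
    _ = 1 - exp (-l) := by ring

lemma abs_steinSolution_succ_sub_le (hl : 0 < l) {h : ℕ → ℝ} (h0 : ∀ j, 0 ≤ h j)
    (h1 : ∀ j, h j ≤ 1) {c : ℝ} (hc : ∑' i, h i * poissonMass l i = c) (k : ℕ) :
    |steinSolution l (fun j => h j - c) (k + 2) - steinSolution l (fun j => h j - c) (k + 1)|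
      ≤ (1 - exp (-l)) / l := by
  have hc' : ∑' i, (1 - h i) * poissonMass l i = 1 - c := by
    simp only [sub_mul, one_mul]
    rw [(hasSum_poissonMass hl.le).summable.tsum_sub (summable_mul_poissonMass hl.le h0 h1),
      (hasSum_poissonMass hl.le).tsum_eq, hc]
  have hneg : steinSolution l (fun j => (1 - h j) - (1 - c)) = -steinSolution l (fun j => h j - c) := by
    rw [← steinSolution_neg]
    congr 1
    funext j
    ring
  have hupper := mul_steinSolution_succ_sub_le hl h0 h1 hc k
  -- The upper bound for `1 - h`, whose Stein solution is `-f`, is the lower bound for `h`.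
  have hlower := mul_steinSolution_succ_sub_le hl (fun j => sub_nonneg.2 (h1 j))
    (fun j => sub_le_self 1 (h0 j)) hc' k
  rw [hneg, Pi.neg_apply, Pi.neg_apply] at hlower
  rw [abs_le, neg_le, le_div_iff₀ hl, le_div_iff₀ hl]
  constructor <;> linarith

section Probability

variable {Ω : Type*} [MeasurableSpace Ω] {P : Measure Ω}

lemma integral_comp_eq_tsum_pm {Y : Ω → ℕ} (hY : Measurable Y) {g : ℕ → ℝ}
    (hg : Integrable (fun ω => g (Y ω)) P) :
    ∫ ω, g (Y ω) ∂P = ∑' j, g j * pm P Y j := by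
  rw [← integral_map hY.aemeasurable .of_discrete,
    integral_countable ((integrable_map_measure .of_discrete hY.aemeasurable).2 hg)]
  congr 1
  funext j
  rw [smul_eq_mul, mul_comm, measureReal_def, Measure.map_apply hY (measurableSet_singleton j)]
  rfl

lemma hasSum_pm [IsProbabilityMeasure P] {Y : Ω → ℕ} (hY : Measurable Y) : HasSum (pm P Y) 1 := by
  have htsum : ∑' j, pm P Y j = 1 := by
    simpa using (integral_comp_eq_tsum_pm (P := P) hY (g := fun _ => 1) (integrable_const 1)).symm
  have hsum : Summable (pm P Y) := by
    by_contra h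
    rw [tsum_eq_zero_of_not_summable h] at htsum
    exact zero_ne_one htsum
  exact htsum ▸ hsum.hasSum

lemma ae_le_one_of_pm_zero_add_pm_one [IsProbabilityMeasure P] {Y : Ω → ℕ} (hY : Measurable Y)
    (h : pm P Y 0 + pm P Y 1 = 1) : ∀ᵐ ω ∂P, Y ω ≤ 1 := by
  have hset : {ω | Y ω ≤ 1} = {ω | Y ω = 0} ∪ {ω | Y ω = 1} := by
    ext ω
    simp only [Set.mem_ofPred_eq, Set.mem_union]
    omega
  have hdisj : Disjoint {ω | Y ω = 0} {ω | Y ω = 1} :=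
    Set.disjoint_left.2 fun ω h0 h1 => by simp_all
  have hone : P {ω | Y ω ≤ 1} = 1 := by
    rw [hset, measure_union hdisj (hY (measurableSet_singleton 1)), ← ENNReal.toReal_eq_one_iff,
      ENNReal.toReal_add (measure_ne_top _ _) (measure_ne_top _ _)]
    exact h
  exact (mem_ae_iff_prob_eq_one (hY measurableSet_Iic)).2 hone

lemma integral_natCast_eq_pm_one {ξ : Ω → ℕ} (hξ : Measurable ξ) (hξ1 : ∀ᵐ ω ∂P, ξ ω ≤ 1) :
    ∫ ω, (ξ ω : ℝ) ∂P = pm P ξ 1 := by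
  have hind : (fun ω => (ξ ω : ℝ)) =ᵐ[P] {ω | ξ ω = 1}.indicator 1 := by
    filter_upwards [hξ1] with ω hω
    rcases Nat.le_one_iff_eq_zero_or_eq_one.1 hω with h | h <;> simp [h]
  rw [integral_congr_ae hind,
    integral_indicator_one (s := {ω | ξ ω = 1}) (hξ (measurableSet_singleton 1))]
  rfl

lemma integral_natCast_mul_comp_of_indepFun {ξ V : Ω → ℕ}
    (hξ : Measurable ξ) (hV : Measurable V) (hξ1 : ∀ᵐ ω ∂P, ξ ω ≤ 1) (hind : IndepFun ξ V P)
    (g : ℕ → ℝ) : ∫ ω, (ξ ω : ℝ) * g (V ω) ∂P = pm P ξ 1 * ∫ ω, g (V ω) ∂P := by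
  rw [hind.integral_fun_comp_mul_comp (f := fun m : ℕ => (m : ℝ)) hξ.aemeasurable hV.aemeasurable
    .of_discrete .of_discrete, integral_natCast_eq_pm_one hξ hξ1]

lemma integrable_comp₂_of_ae_le [IsFiniteMeasure P] {X Y : Ω → ℕ} (hX : Measurable X)
    (hY : Measurable Y) {M N : ℕ} (hXM : ∀ᵐ ω ∂P, X ω ≤ M) (hYN : ∀ᵐ ω ∂P, Y ω ≤ N)
    (g : ℕ → ℕ → ℝ) : Integrable (fun ω => g (X ω) (Y ω)) P := by
  refine .of_bound ((Measurable.of_discrete (f := Function.uncurry g)).comp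
    (hX.prodMk hY)).aestronglyMeasurable (∑ a ∈ range (M + 1), ∑ b ∈ range (N + 1), |g a b|) ?_
  filter_upwards [hXM, hYN] with ω hx hy
  calc ‖g (X ω) (Y ω)‖ ≤ ∑ b ∈ range (N + 1), |g (X ω) b| :=
        single_le_sum (f := fun b => |g (X ω) b|) (fun _ _ => abs_nonneg _)
          (mem_range.2 (Nat.lt_succ_of_le hy))
    _ ≤ ∑ a ∈ range (M + 1), ∑ b ∈ range (N + 1), |g a b| :=
        single_le_sum (f := fun a => ∑ b ∈ range (N + 1), |g a b|)
          (fun _ _ => sum_nonneg fun _ _ => abs_nonneg _) (mem_range.2 (Nat.lt_succ_of_le hx))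

lemma integral_stein_add_bernoulli [IsFiniteMeasure P] {ξ V : Ω → ℕ} (hξ : Measurable ξ)
    (hV : Measurable V) (hξ1 : ∀ᵐ ω ∂P, ξ ω ≤ 1) {N : ℕ} (hVN : ∀ᵐ ω ∂P, V ω ≤ N)
    (hind : IndepFun ξ V P) (f : ℕ → ℝ) :
    ∫ ω, (pm P ξ 1 * f (V ω + ξ ω + 1) - ξ ω * f (V ω + ξ ω)) ∂P
      = pm P ξ 1 ^ 2 * ∫ ω, (f (V ω + 2) - f (V ω + 1)) ∂P := by
  set p := pm P ξ 1
  have hint := integrable_comp₂_of_ae_le hξ hV hξ1 hVN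
  have hpt : (fun ω => p * f (V ω + ξ ω + 1) - ξ ω * f (V ω + ξ ω)) =ᵐ[P]
      fun ω => p * f (V ω + 1) + p * (ξ ω * (f (V ω + 2) - f (V ω + 1))) - ξ ω * f (V ω + 1) := by
    filter_upwards [hξ1] with ω hω
    rcases Nat.le_one_iff_eq_zero_or_eq_one.1 hω with h | h
    · simp [h]
    · simp [h]
      ring
  have hΔ : ∫ ω, (ξ ω : ℝ) * (f (V ω + 2) - f (V ω + 1)) ∂P
      = p * ∫ ω, (f (V ω + 2) - f (V ω + 1)) ∂P :=
    integral_natCast_mul_comp_of_indepFun hξ hV hξ1 hind fun m => f (m + 2) - f (m + 1)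
  have hf : ∫ ω, (ξ ω : ℝ) * f (V ω + 1) ∂P = p * ∫ ω, f (V ω + 1) ∂P :=
    integral_natCast_mul_comp_of_indepFun hξ hV hξ1 hind fun m => f (m + 1)
  rw [integral_congr_ae hpt,
    integral_sub (hint fun a v => p * f (v + 1) + p * (a * (f (v + 2) - f (v + 1))))
      (hint fun a v => a * f (v + 1)),
    integral_add (hint fun _ v => p * f (v + 1)) (hint fun a v => p * (a * (f (v + 2) - f (v + 1)))),
    integral_const_mul, integral_const_mul, hΔ, hf]
  ring

theorem integral_stein_sum_bernoulli [IsFiniteMeasure P] {n : ℕ} {ξ : Fin n → Ω → ℕ}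
    (hmeas : ∀ i, Measurable (ξ i)) (hindep : iIndepFun ξ P) (hξ1 : ∀ i, ∀ᵐ ω ∂P, ξ i ω ≤ 1)
    (f : ℕ → ℝ) :
    ∫ ω, ((∑ i, pm P (ξ i) 1) * f (∑ i, ξ i ω + 1) - (∑ i, ξ i ω : ℕ) * f (∑ i, ξ i ω)) ∂P
      = ∑ i, pm P (ξ i) 1 ^ 2 * ∫ ω, (f (∑ j ∈ univ.erase i, ξ j ω + 2)
          - f (∑ j ∈ univ.erase i, ξ j ω + 1)) ∂P := by
  have hWmeas : Measurable fun ω => ∑ i, ξ i ω := Finset.measurable_sum _ fun i _ => hmeas i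
  have hWn : ∀ᵐ ω ∂P, ∑ i, ξ i ω ≤ n := by
    filter_upwards [ae_all_iff.2 hξ1] with ω hω
    simpa using sum_le_sum fun i (_ : i ∈ univ) => hω i
  have hsplit : ∀ i ω, ∑ j, ξ j ω = ∑ j ∈ univ.erase i, ξ j ω + ξ i ω :=
    fun i ω => (sum_erase_add _ _ (mem_univ i)).symm
  have hpt : ∀ ω, (∑ i, pm P (ξ i) 1) * f (∑ i, ξ i ω + 1) - (∑ i, ξ i ω : ℕ) * f (∑ i, ξ i ω)
      = ∑ i, (pm P (ξ i) 1 * f (∑ j, ξ j ω + 1) - ξ i ω * f (∑ j, ξ j ω)) := by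
    intro ω
    push_cast
    rw [sum_sub_distrib, sum_mul, sum_mul]
  simp_rw [hpt]
  rw [integral_finsetSum _ fun i _ => integrable_comp₂_of_ae_le (hmeas i) hWmeas (hξ1 i) hWn
    fun a w => pm P (ξ i) 1 * f (w + 1) - a * f w]
  refine sum_congr rfl fun i _ => ?_
  have hVmeas : Measurable fun ω => ∑ j ∈ univ.erase i, ξ j ω :=
    Finset.measurable_sum _ fun j _ => hmeas j
  have hVn : ∀ᵐ ω ∂P, ∑ j ∈ univ.erase i, ξ j ω ≤ n := by
    filter_upwards [hWn] with ω hω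
    rw [hsplit i] at hω
    omega
  have hind : IndepFun (ξ i) (fun ω => ∑ j ∈ univ.erase i, ξ j ω) P := by
    have := (hindep.indepFun_finsetSum_of_notMem hmeas (notMem_erase i univ)).symm
    rwa [Finset.sum_fn] at this
  simp_rw [hsplit i]
  exact integral_stein_add_bernoulli (hmeas i) hVmeas (hξ1 i) hVn hind f

theorem abs_tsum_mul_pm_sub_tsum_mul_poissonMass_le [IsProbabilityMeasure P] {n : ℕ}
    {ξ : Fin n → Ω → ℕ} (hmeas : ∀ i, Measurable (ξ i)) (hindep : iIndepFun ξ P)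
    (hξ1 : ∀ i, ∀ᵐ ω ∂P, ξ i ω ≤ 1) {μ : ℝ} (hμ : ∑ i, pm P (ξ i) 1 = μ) (hμpos : 0 < μ)
    {h : ℕ → ℝ} (h0 : ∀ j, 0 ≤ h j) (h1 : ∀ j, h j ≤ 1) :
    |∑' j, h j * pm P (fun ω => ∑ i, ξ i ω) j - ∑' j, h j * poissonMass μ j|
      ≤ (∑ i, pm P (ξ i) 1 ^ 2) * ((1 - exp (-μ)) / μ) := by
  set c := ∑' j, h j * poissonMass μ j with hc
  set f := steinSolution μ fun j => h j - c
  have hWmeas : Measurable fun ω => ∑ i, ξ i ω := Finset.measurable_sum _ fun i _ => hmeas i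
  have hhW : Integrable (fun ω => h (∑ i, ξ i ω)) P :=
    .of_bound (Measurable.of_discrete.comp hWmeas).aestronglyMeasurable 1
      (.of_forall fun ω => by
        rw [Real.norm_eq_abs, abs_le]
        constructor <;> linarith [h0 (∑ i, ξ i ω), h1 (∑ i, ξ i ω)])
  rw [← integral_comp_eq_tsum_pm hWmeas hhW]
  have hstein : ∫ ω, h (∑ i, ξ i ω) ∂P - c
      = ∫ ω, (μ * f (∑ i, ξ i ω + 1) - (∑ i, ξ i ω : ℕ) * f (∑ i, ξ i ω)) ∂P := by
    have hsub : ∫ ω, (h (∑ i, ξ i ω) - c) ∂P = ∫ ω, h (∑ i, ξ i ω) ∂P - c := by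
      rw [integral_sub hhW (integrable_const c), integral_const, probReal_univ, one_smul]
    rw [← hsub]
    congr 1
    funext ω
    exact (steinSolution_eq hμpos (fun j => h j - c) _).symm
  have hidentity := integral_stein_sum_bernoulli (P := P) hmeas hindep hξ1 f
  rw [hμ] at hidentity
  rw [hstein, hidentity, sum_mul]
  refine (abs_sum_le_sum_abs _ _).trans (sum_le_sum fun i _ => ?_)
  rw [abs_mul, abs_pow, sq_abs]
  gcongr
  have hΔ : ∀ ω, ‖f (∑ j ∈ univ.erase i, ξ j ω + 2) - f (∑ j ∈ univ.erase i, ξ j ω + 1)‖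
      ≤ (1 - exp (-μ)) / μ :=
    fun ω => (Real.norm_eq_abs _).trans_le (abs_steinSolution_succ_sub_le hμpos h0 h1 hc.symm _)
  simpa using norm_integral_le_of_norm_le_const (μ := P) (.of_forall hΔ)

end Probability

theorem poisson_approximation_bernoulli_general {Ω : Type*} [MeasurableSpace Ω] (P : Measure Ω)
    [IsProbabilityMeasure P] (n : ℕ) (ξ : Fin n → Ω → ℕ) (hmeas : ∀ i, Measurable (ξ i))
    (hindep : iIndepFun ξ P)
    (p : Fin n → ℝ)
    (hpmf1 : ∀ i, pm P (ξ i) 1 = p i)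
    (hpmf0 : ∀ i, pm P (ξ i) 0 = 1 - p i)
    (μ : ℝ) (hμdef : μ = ∑ i, p i) (hμpos : 0 < μ)
    (X : Ω → ℕ)
    (hXpmf : ∀ k : ℕ, pm P X k = Real.exp (-μ) * μ ^ k / k.factorial) :
    dTV P (fun ω => ∑ i, ξ i ω) X ≤ (∑ i, (p i) ^ 2) / max 1 μ := by
  have hξ1 : ∀ i, ∀ᵐ ω ∂P, ξ i ω ≤ 1 := fun i =>
    ae_le_one_of_pm_zero_add_pm_one (hmeas i) (by rw [hpmf0, hpmf1]; ring)
  have hμ : ∑ i, pm P (ξ i) 1 = μ := by simp only [hpmf1, hμdef]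
  have hW : Measurable fun ω => ∑ i, ξ i ω := Finset.measurable_sum _ fun i _ => hmeas i
  have hX : pm P X = poissonMass μ := funext hXpmf
  set h := {j | poissonMass μ j < pm P (fun ω => ∑ i, ξ i ω) j}.indicator (1 : ℕ → ℝ)
  have h0 : ∀ j, 0 ≤ h j := Set.indicator_nonneg fun _ _ => zero_le_one
  have h1 : ∀ j, h j ≤ 1 := fun j => Set.indicator_le_self' (fun _ _ => zero_le_one) j
  have hbound := abs_tsum_mul_pm_sub_tsum_mul_poissonMass_le hmeas hindep hξ1 hμ hμpos h0 h1
  calc dTV P (fun ω => ∑ i, ξ i ω) X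
      = ∑' j, h j * pm P (fun ω => ∑ i, ξ i ω) j - ∑' j, h j * poissonMass μ j := by
        rw [dTV, hX]
        exact half_tsum_abs_sub_eq (hasSum_pm hW).summable (hasSum_poissonMass hμpos.le).summable
          ((hasSum_pm hW).tsum_eq.trans (hasSum_poissonMass hμpos.le).tsum_eq.symm)
    _ ≤ (∑ i, pm P (ξ i) 1 ^ 2) * ((1 - exp (-μ)) / μ) := (le_abs_self _).trans hbound
    _ ≤ (∑ i, p i ^ 2) / max 1 μ := by
        simp only [hpmf1]
        rw [div_eq_mul_one_div (∑ i, p i ^ 2)]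
        exact mul_le_mul_of_nonneg_left (one_sub_exp_neg_div_le_one_div_max hμpos) (by positivity)

/-- Remark 3(a): Poisson approximation to a sum of independent Bernoulli random variables:
`d_TV(Wₙ, Po(μ)) ≤ (∑ pᵢ²) / max(1, μ)`. -/
theorem poisson_approximation_bernoulli {Ω : Type*} [MeasurableSpace Ω] (P : Measure Ω)
    [IsProbabilityMeasure P] (n : ℕ) (ξ : Fin n → Ω → ℕ) (hmeas : ∀ i, Measurable (ξ i))
    (hindep : iIndepFun ξ P)
    (p : Fin n → ℝ) (hp : ∀ i, p i ∈ Set.Icc (0 : ℝ) 1)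
    (hpmf1 : ∀ i, pm P (ξ i) 1 = p i)
    (hpmf0 : ∀ i, pm P (ξ i) 0 = 1 - p i)
    (μ : ℝ) (hμdef : μ = ∑ i, p i) (hμpos : 0 < μ)
    (X : Ω → ℕ) (hX : Measurable X)
    (hXpmf : ∀ k : ℕ, pm P X k = Real.exp (-μ) * μ ^ k / k.factorial) :
    dTV P (fun ω => ∑ i, ξ i ω) X ≤ (∑ i, (p i) ^ 2) / max 1 μ :=
  poisson_approximation_bernoulli_general P n ξ hmeas hindep p hpmf1 hpmf0 μ hμdef hμpos X hXpmf
end Stein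
end
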